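/- Let L be an infinite unary regular language accepted by a DFA with m states, where the cycle of the DFA has length i (1 ≤ i ≤ m) and the initial tail has m−i states, and let L' be a finite unary language with longest word a^(n−2). Then for all t ≥ m+n−2: a^t ∈ L ⊙ L' if and only if a^(t−i) ∈ L ⊙ L'. Consequently the state complexity of L ⊙ L' is at most m+n−2. -/
import Mathlib


/-- Overlap assembly of two languages. -/
def langOA {α : Type*} (L₁ L₂ : Language α) : Language α :=
  {z | ∃ u v w : List α, v ≠ [] ∧ u ++ v ∈ L₁ ∧ v ++ w ∈ L₂ ∧ z = u ++ v ++ w}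

/-- `scLe L k` : the state complexity of `L` is at most `k`. -/
def scLe {α : Type*} (L : Language α) (k : ℕ) : Prop :=
  ∃ (Q : Type) (_ : Fintype Q) (M : DFA α Q), Fintype.card Q ≤ k ∧ M.accepts = L

/-- The unary word `a^k`. -/
def urep (k : ℕ) : List Unit := List.replicate k ()

lemma urep_length (k : ℕ) : (urep k).length = k := by simp [urep]

lemma unit_eq_urep (w : List Unit) : w = urep w.length := by
  induction w with
  | nil => rfl
  | cons a l ih =>
    simp only [urep, List.length_cons, List.replicate_succ]
    exact congrArg (List.cons ()) ih

lemma urep_add (a b : ℕ) : urep (a + b) = urep a ++ urep b :=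
  List.replicate_add a b ()

lemma urep_ne_nil {k : ℕ} (h : 1 ≤ k) : urep k ≠ [] := by
  intro hk
  have h2 := congrArg List.length hk
  rw [urep_length] at h2
  simp at h2
  omega

lemma mem_OA_iff (A L' : Language Unit) (t : ℕ) :
    urep t ∈ langOA A L' ↔
      ∃ s r, urep s ∈ A ∧ urep r ∈ L' ∧ 1 ≤ s ∧ 1 ≤ r ∧ s ≤ t ∧ r ≤ t ∧ t + 1 ≤ s + r := by
  constructor
  · rintro ⟨u, v, w, hv, h1, h2, heq⟩
    have hvlen : 1 ≤ v.length := List.length_pos_iff.2 hv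
    have ht : t = u.length + v.length + w.length := by
      have h3 := congrArg List.length heq
      simp [urep_length] at h3
      omega
    have hu : urep (u.length + v.length) = u ++ v := by
      rw [← List.length_append]; exact (unit_eq_urep _).symm
    have hw : urep (v.length + w.length) = v ++ w := by
      rw [← List.length_append]; exact (unit_eq_urep _).symm
    refine ⟨u.length + v.length, v.length + w.length, ?_, ?_, by omega, by omega,
      by omega, by omega, by omega⟩
    · rw [hu]; exact h1
    · rw [hw]; exact h2
  · rintro ⟨s, r, hs, hr, hs1, hr1, hst, hrt, htsr⟩
    refine ⟨urep (t - r), urep (s + r - t), urep (t - s), urep_ne_nil (by omega), ?_, ?_, ?_⟩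
    · rw [← urep_add]
      have : t - r + (s + r - t) = s := by omega
      rw [this]; exact hs
    · rw [← urep_add]
      have : s + r - t + (t - s) = r := by omega
      rw [this]; exact hr
    · rw [← urep_add, ← urep_add]
      congr 1
      omega

lemma iterB1 {m i : ℕ} (g : Fin m → Fin m)
    (hg : ∀ q : Fin m, ((g q) : ℕ) = if q.val + 1 < m then q.val + 1 else m - i) :
    ∀ (k : ℕ) (q : Fin m), q.val + k < m → ((g^[k] q) : ℕ) = q.val + k := by
  intro k
  induction k with
  | zero => intro q _; simp
  | succ k ih =>
    intro q h
    rw [Function.iterate_succ_apply]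
    have hq : ((g q) : ℕ) = q.val + 1 := by
      rw [hg q]; rw [if_pos (by omega)]
    have := ih (g q) (by omega)
    omega

lemma cycle_fix {m i : ℕ} (hi1 : 1 ≤ i) (him : i ≤ m) (g : Fin m → Fin m)
    (hg : ∀ q : Fin m, ((g q) : ℕ) = if q.val + 1 < m then q.val + 1 else m - i)
    (q : Fin m) (hq : m - i ≤ q.val) : g^[i] q = q := by
  have hv : q.val < m := q.isLt
  set a := m - 1 - q.val with ha
  set b := q.val - (m - i) with hb
  have hi : i = b + (1 + a) := by omega
  have h1 : ((g^[a] q) : ℕ) = q.val + a := iterB1 g hg a q (by omega)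
  have h2 : ((g (g^[a] q)) : ℕ) = m - i := by
    rw [hg]; rw [if_neg (by omega)]
  have h3 : ((g^[b] (g (g^[a] q))) : ℕ) = (m - i) + b := by
    have := iterB1 g hg b (g (g^[a] q)) (by omega)
    omega
  have : g^[i] q = g^[b] (g^[1] (g^[a] q)) := by
    rw [hi, Function.iterate_add_apply, Function.iterate_add_apply]
  rw [this]
  apply Fin.ext
  simpa using by omega

lemma evalFrom_urep {σ : Type*} (D : DFA Unit σ) :
    ∀ (t : ℕ) (s : σ), D.evalFrom s (urep t) = (fun q => D.step q ())^[t] s := by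
  intro t
  induction t with
  | zero => intro s; rfl
  | succ t ih =>
    intro s
    show D.evalFrom s (urep (t + 1)) = _
    rw [show urep (t + 1) = () :: urep t from by simp [urep, List.replicate_succ]]
    show D.evalFrom (D.step s ()) (urep t) = _
    rw [ih, Function.iterate_succ_apply]

lemma eval_ge {m i : ℕ} (hi1 : 1 ≤ i) (him : i ≤ m) (g : Fin m → Fin m)
    (hg : ∀ q : Fin m, ((g q) : ℕ) = if q.val + 1 < m then q.val + 1 else m - i)
    (q0 : Fin m) (h0 : (q0 : ℕ) = 0) :
    ∀ t, m - i ≤ t → m - i ≤ ((g^[t] q0) : ℕ) := by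
  intro t
  induction t with
  | zero => intro h; omega
  | succ t ih =>
    intro _
    rw [Function.iterate_succ_apply']
    have hs := hg (g^[t] q0)
    by_cases hc : m - i ≤ t
    · have h2 := ih hc
      split_ifs at hs <;> omega
    · have h2 := iterB1 g hg t q0 (by omega)
      split_ifs at hs <;> omega

lemma eval_period {m i : ℕ} (hi1 : 1 ≤ i) (him : i ≤ m) (g : Fin m → Fin m)
    (hg : ∀ q : Fin m, ((g q) : ℕ) = if q.val + 1 < m then q.val + 1 else m - i)
    (q0 : Fin m) (h0 : (q0 : ℕ) = 0) (t : ℕ) (h : m - i ≤ t) :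
    g^[t + i] q0 = g^[t] q0 := by
  rw [show t + i = i + t from by omega, Function.iterate_add_apply]
  exact cycle_fix hi1 him g hg _ (eval_ge hi1 him g hg q0 h0 t h)

theorem unary_infinite_finite_large_case (m n i : ℕ) (hn : 2 ≤ n)
    (hi1 : 1 ≤ i) (him : i ≤ m)
    (D : DFA Unit (Fin m))
    -- the DFA is a tail of `m - i` states followed by a cycle of length `i`
    (hstart : (D.start : ℕ) = 0)
    (hstep : ∀ q : Fin m, ((D.step q ()) : ℕ) = if q.val + 1 < m then q.val + 1 else m - i)
    (hinf : D.accepts.Infinite)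
    (L' : Language Unit)
    (h'mem : urep (n - 2) ∈ L') (h'max : ∀ w ∈ L', w.length ≤ n - 2) :
    (∀ t, m + n - 2 ≤ t →
      (urep t ∈ langOA D.accepts L' ↔ urep (t - i) ∈ langOA D.accepts L')) ∧
    scLe (langOA D.accepts L') (m + n - 2) := by
  have hm1 : 1 ≤ m := le_trans hi1 him
  have hper : ∀ s, m - i ≤ s → (urep (s + i) ∈ D.accepts ↔ urep s ∈ D.accepts) := by
    intro s hs
    rw [DFA.mem_accepts, DFA.mem_accepts]
    simp only [DFA.eval]
    rw [evalFrom_urep, evalFrom_urep,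
      eval_period hi1 him (fun q => D.step q ()) hstep D.start hstart s hs]
  have key : ∀ t, m + n - 2 ≤ t →
      (urep t ∈ langOA D.accepts L' ↔ urep (t - i) ∈ langOA D.accepts L') := by
    intro t ht
    rw [mem_OA_iff, mem_OA_iff]
    constructor
    · rintro ⟨s, r, hsA, hrL, hs1, hr1, hst, hrt, htsr⟩
      have hrn : r ≤ n - 2 := by
        have := h'max _ hrL; rwa [urep_length] at this
      have hsm : m + 1 ≤ s := by omega
      refine ⟨s - i, r, ?_, hrL, by omega, hr1, by omega, by omega, by omega⟩
      have h2 := hper (s - i) (by omega)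
      rw [show s - i + i = s from by omega] at h2
      exact h2.1 hsA
    · rintro ⟨s, r, hsA, hrL, hs1, hr1, hst, hrt, htsr⟩
      have hrn : r ≤ n - 2 := by
        have := h'max _ hrL; rwa [urep_length] at this
      exact ⟨s + i, r, (hper s (by omega)).2 hsA, hrL, by omega, hr1, by omega, by omega,
        by omega⟩
  refine ⟨key, ?_⟩
  set N := m + n - 2 with hN
  have hiN : i ≤ N := by omega
  have hN0 : 0 < N := by omega
  let gM : Fin N → Fin N := fun q =>
    if h : q.val + 1 < N then ⟨q.val + 1, h⟩ else ⟨N - i, by omega⟩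
  let M : DFA Unit (Fin N) :=
    { step := fun q _ => gM q
      start := ⟨0, hN0⟩
      accept := {q | urep q.val ∈ langOA D.accepts L'} }
  have hgM : ∀ q : Fin N, ((gM q) : ℕ) = if q.val + 1 < N then q.val + 1 else N - i := by
    intro q
    simp only [gM]
    split_ifs <;> rfl
  have hstartM : ((⟨0, hN0⟩ : Fin N) : ℕ) = 0 := rfl
  have main : ∀ t, (urep ((gM^[t] (⟨0, hN0⟩ : Fin N)) : ℕ) ∈ langOA D.accepts L' ↔
      urep t ∈ langOA D.accepts L') := by
    intro t
    induction t using Nat.strong_induction_on with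
    | _ t ih =>
      by_cases hc : t < N
      · rw [iterB1 gM hgM t _ (by omega : ((⟨0, hN0⟩ : Fin N) : ℕ) + t < N)]
        simp
      · have hper2 : gM^[t] (⟨0, hN0⟩ : Fin N) = gM^[t - i] (⟨0, hN0⟩ : Fin N) := by
          have h3 := eval_period (m := N) hi1 hiN gM hgM ⟨0, hN0⟩ rfl (t - i) (by omega)
          rwa [show t - i + i = t from by omega] at h3
        rw [hper2, ih (t - i) (by omega)]
        exact (key t (by omega)).symm
  refine ⟨Fin N, inferInstance, M, by simp, ?_⟩
  ext w
  rw [show w = urep w.length from unit_eq_urep w, DFA.mem_accepts]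
  simp only [DFA.eval]
  rw [evalFrom_urep]
  exact main w.length
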